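/- Let p, q and r be probability measures on a measurable space. Then H((p+q)/2 | r) ≤ (1/2)·H(p|r) + (1/2)·H(q|r) − (1/2)·‖p − q‖_TV², where (p+q)/2 denotes the average of the two measures. -/

import Mathlib

/-!
With `m = (p + q) / 2`, the chain rule `log (dp/dr) = log (dp/dm) + log (dm/dr)` turns the
average `½ H(p|r) + ½ H(q|r)` into `H(m|r) + ½ (H(p|m) + H(q|m))`, so it suffices to bound the
Jensen–Shannon sum `H(p|m) + H(q|m)` from below by `‖p − q‖_TV²`. Since `dq/dm = 2 − φ` for
`φ = dp/dm`, that sum is `∫ φ log φ + (2 − φ) log (2 − φ) dm`, and pointwise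
`φ log φ + (2 − φ) log (2 − φ) ≥ (φ − 1)²`. Jensen's inequality gives
`∫ (φ − 1)² dm ≥ (∫ |φ − 1| dm)²`, and `∫ |φ − 1| dm = ½ ∫ |dp/dm − dq/dm| dm ≥ ‖p − q‖_TV`.
-/

open MeasureTheory
open scoped ENNReal NNReal Classical

/-- Relative entropy `H(p|r) = ∫ log (dp/dr) dp ∈ [0,∞]` when `p ≪ r` (with value `+∞` when the
integrand is not integrable), and `H(p|r) = +∞` otherwise. -/
noncomputable def relEntropy {Y : Type*} [MeasurableSpace Y] (p r : Measure Y) : EReal :=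
  if p ≪ r ∧ Integrable (llr p r) p then ((∫ x, llr p r x ∂p : ℝ) : EReal) else ⊤

/-- Total variation distance `‖p − q‖_TV = sup {|p(A) − q(A)| : A measurable}`. -/
noncomputable def tvDist {Y : Type*} [MeasurableSpace Y] (p q : Measure Y) : ℝ :=
  ⨆ A : {A : Set Y // MeasurableSet A}, |(p A.1).toReal - (q A.1).toReal|

open Real Set

lemma sq_le_one_add_mul_log_add_one_sub_mul_log {u : ℝ} (hu₀ : 0 ≤ u) (hu₁ : u ≤ 1) :
    u ^ 2 ≤ (1 + u) * log (1 + u) + (1 - u) * log (1 - u) := by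
  let F : ℝ → ℝ := fun u ↦ (1 + u) * log (1 + u) + (1 - u) * log (1 - u) - u ^ 2
  have hF : ∀ v ∈ Ioo (0 : ℝ) 1, HasDerivAt F (log (1 + v) - log (1 - v) - 2 * v) v := by
    rintro v ⟨hv₀, hv₁⟩
    have hplus := (hasDerivAt_mul_log (x := 1 + v) (by linarith)).comp v
      ((hasDerivAt_id v).const_add 1)
    have hminus := (hasDerivAt_mul_log (x := 1 - v) (by linarith)).comp v
      ((hasDerivAt_id v).const_sub 1)
    exact ((hplus.add hminus).sub (hasDerivAt_pow 2 v)).congr_deriv (by norm_num; ring)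
  -- `log (1 + v) - log (1 - v) = 2 artanh v` has a power series with nonnegative coefficients
  have hF' : ∀ v ∈ Ioo (0 : ℝ) 1, 0 ≤ log (1 + v) - log (1 - v) - 2 * v := by
    rintro v ⟨hv₀, hv₁⟩
    have := le_hasSum (hasSum_log_sub_log_of_abs_lt_one (abs_lt.2 ⟨by linarith, hv₁⟩)) 0
      fun k _ ↦ by positivity
    simpa using this
  have hmono : MonotoneOn F (Icc 0 1) := by
    refine monotoneOn_of_hasDerivWithinAt_nonneg (f' := fun v ↦ log (1 + v) - log (1 - v) - 2 * v)
      (convex_Icc 0 1) ?_ ?_ ?_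
    · have := continuous_mul_log
      fun_prop
    · simp only [interior_Icc]
      exact fun v hv ↦ (hF v hv).hasDerivWithinAt
    · simpa only [interior_Icc] using hF'
  simpa [F] using hmono (left_mem_Icc.2 zero_le_one) ⟨hu₀, hu₁⟩ hu₀

lemma sq_sub_one_le_mul_log_add_two_sub_mul_log {x : ℝ} (hx₀ : 0 ≤ x) (hx₂ : x ≤ 2) :
    (x - 1) ^ 2 ≤ x * log x + (2 - x) * log (2 - x) := by
  rcases le_total 1 x with h | h
  · have := sq_le_one_add_mul_log_add_one_sub_mul_log (u := x - 1) (by linarith) (by linarith)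
    rwa [add_sub_cancel, sub_sub_eq_add_sub, one_add_one_eq_two] at this
  · have := sq_le_one_add_mul_log_add_one_sub_mul_log (u := 1 - x) (by linarith) (by linarith)
    rw [sub_sub_cancel, ← add_sub_assoc, one_add_one_eq_two, ← neg_sub x 1, neg_sq] at this
    linarith

section
variable {α : Type*} [MeasurableSpace α] {μ ν κ : Measure α}

lemma relEntropy_of_ac_of_integrable (h : μ ≪ ν ∧ Integrable (llr μ ν) μ) :
    relEntropy μ ν = ↑(∫ x, llr μ ν x ∂μ) :=
  if_pos h

lemma relEntropy_of_not (h : ¬ (μ ≪ ν ∧ Integrable (llr μ ν) μ)) : relEntropy μ ν = ⊤ :=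
  if_neg h

lemma relEntropy_ne_bot (μ ν : Measure α) : relEntropy μ ν ≠ ⊥ := by
  unfold relEntropy
  split_ifs <;> simp

lemma sq_integral_le_integral_sq [IsProbabilityMeasure μ] {f : α → ℝ} (hf : MemLp f 2 μ) :
    (∫ x, f x ∂μ) ^ 2 ≤ ∫ x, f x ^ 2 ∂μ := by
  have := ProbabilityTheory.variance_nonneg f μ
  rw [ProbabilityTheory.variance_eq_sub hf] at this
  simpa using this

lemma integrable_llr_of_toReal_rnDeriv_le [SigmaFinite μ] [IsFiniteMeasure ν] (hμν : μ ≪ ν)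
    {C : ℝ} (hC : ∀ᵐ x ∂ν, (μ.rnDeriv ν x).toReal ≤ C) : Integrable (llr μ ν) μ := by
  rw [← integrable_rnDeriv_mul_log_iff hμν]
  obtain ⟨B, hB⟩ := isCompact_Icc.exists_bound_of_continuousOn (s := Icc 0 C)
    continuous_mul_log.continuousOn
  refine Integrable.of_bound (by fun_prop) B ?_
  filter_upwards [hC] with x hx
  exact hB _ ⟨ENNReal.toReal_nonneg, hx⟩

lemma llr_ae_eq_llr_add_llr [SigmaFinite μ] [SigmaFinite ν] [SigmaFinite κ] (hμν : μ ≪ ν)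
    (hνκ : ν ≪ κ) : llr μ κ =ᵐ[μ] llr μ ν + llr ν κ := by
  filter_upwards [(hμν.trans hνκ).ae_le (Measure.rnDeriv_mul_rnDeriv hμν),
    Measure.rnDeriv_pos hμν, hμν.ae_le (Measure.rnDeriv_pos hνκ),
    hμν.ae_le (Measure.rnDeriv_lt_top μ ν), (hμν.trans hνκ).ae_le (Measure.rnDeriv_lt_top ν κ)]
    with x hmul hpos₁ hpos₂ hfin₁ hfin₂
  rw [Pi.mul_apply] at hmul
  simp only [llr_def, Pi.add_apply]
  rw [← hmul, ENNReal.toReal_mul,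
    log_mul (ENNReal.toReal_pos hpos₁.ne' hfin₁.ne).ne' (ENNReal.toReal_pos hpos₂.ne' hfin₂.ne).ne']

lemma integrable_llr_right_of_ac [SigmaFinite μ] [SigmaFinite ν] [SigmaFinite κ] (hμν : μ ≪ ν)
    (hνκ : ν ≪ κ) (hμκ_int : Integrable (llr μ κ) μ) (hμν_int : Integrable (llr μ ν) μ) :
    Integrable (llr ν κ) μ :=
  (hμκ_int.sub hμν_int).congr <| by
    filter_upwards [llr_ae_eq_llr_add_llr hμν hνκ] with x hx
    simp [hx]

lemma integral_llr_eq_add_of_ac [SigmaFinite μ] [SigmaFinite ν] [SigmaFinite κ] (hμν : μ ≪ ν)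
    (hνκ : ν ≪ κ) (hμν_int : Integrable (llr μ ν) μ) (hνκ_int : Integrable (llr ν κ) μ) :
    ∫ x, llr μ κ x ∂μ = ∫ x, llr μ ν x ∂μ + ∫ x, llr ν κ x ∂μ := by
  rw [integral_congr_ae (llr_ae_eq_llr_add_llr hμν hνκ), ← integral_add hμν_int hνκ_int]
  rfl

lemma abs_measureReal_sub_le_integral_abs_sub [IsFiniteMeasure μ] [IsFiniteMeasure ν]
    [SigmaFinite κ] (hμ : μ ≪ κ) (hν : ν ≪ κ) (h_univ : μ univ = ν univ) {s : Set α}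
    (hs : MeasurableSet s) :
    2 * |μ.real s - ν.real s| ≤
      ∫ x, |(μ.rnDeriv κ x).toReal - (ν.rnDeriv κ x).toReal| ∂κ := by
  set g := fun x ↦ (μ.rnDeriv κ x).toReal - (ν.rnDeriv κ x).toReal
  have hg : Integrable g κ :=
    Measure.integrable_toReal_rnDeriv.sub Measure.integrable_toReal_rnDeriv
  have hset : ∀ t, ∫ x in t, g x ∂κ = μ.real t - ν.real t := fun t ↦ by
    rw [integral_sub Measure.integrable_toReal_rnDeriv.integrableOn
      Measure.integrable_toReal_rnDeriv.integrableOn, Measure.setIntegral_toReal_rnDeriv hμ,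
      Measure.setIntegral_toReal_rnDeriv hν]
  have hcompl : μ.real sᶜ - ν.real sᶜ = -(μ.real s - ν.real s) := by
    have h_univ_real : μ.real univ = ν.real univ := by simp only [measureReal_def, h_univ]
    rw [measureReal_compl hs, measureReal_compl hs, h_univ_real]
    ring
  calc 2 * |μ.real s - ν.real s| = |∫ x in s, g x ∂κ| + |∫ x in sᶜ, g x ∂κ| := by
        rw [hset s, hset sᶜ, hcompl, abs_neg]; ring
    _ ≤ ∫ x in s, |g x| ∂κ + ∫ x in sᶜ, |g x| ∂κ :=
        add_le_add abs_integral_le_integral_abs abs_integral_le_integral_abs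
    _ = ∫ x, |g x| ∂κ := integral_add_compl hs hg.abs

lemma tvDist_nonneg (μ ν : Measure α) : 0 ≤ tvDist μ ν :=
  Real.iSup_nonneg fun _ ↦ abs_nonneg _

lemma tvDist_le_integral_abs_sub_rnDeriv [IsFiniteMeasure μ] [IsFiniteMeasure ν]
    [SigmaFinite κ] (hμ : μ ≪ κ) (hν : ν ≪ κ) (h_univ : μ univ = ν univ) :
    tvDist μ ν ≤ (∫ x, |(μ.rnDeriv κ x).toReal - (ν.rnDeriv κ x).toReal| ∂κ) / 2 := by
  refine Real.iSup_le (fun s ↦ ?_) (by positivity)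
  have := abs_measureReal_sub_le_integral_abs_sub hμ hν h_univ s.2
  rw [measureReal_def, measureReal_def] at this
  linarith

noncomputable def midMeasure (μ ν : Measure α) : Measure α := (2 : ℝ≥0∞)⁻¹ • (μ + ν)

lemma midMeasure_comm (μ ν : Measure α) : midMeasure μ ν = midMeasure ν μ := by
  rw [midMeasure, midMeasure, add_comm]

instance [IsFiniteMeasure μ] [IsFiniteMeasure ν] : IsFiniteMeasure (midMeasure μ ν) := by
  constructor
  simp [midMeasure, ENNReal.mul_lt_top_iff, measure_lt_top]

instance [IsProbabilityMeasure μ] [IsProbabilityMeasure ν] :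
    IsProbabilityMeasure (midMeasure μ ν) := by
  constructor
  simp [midMeasure, ENNReal.inv_two_add_inv_two]

lemma absolutelyContinuous_midMeasure_left (μ ν : Measure α) : μ ≪ midMeasure μ ν :=
  (Measure.AbsolutelyContinuous.rfl.add_right ν).trans (Measure.absolutelyContinuous_smul (by simp))

lemma absolutelyContinuous_midMeasure_right (μ ν : Measure α) : ν ≪ midMeasure μ ν :=
  midMeasure_comm ν μ ▸ absolutelyContinuous_midMeasure_left ν μ

lemma midMeasure_absolutelyContinuous (hμ : μ ≪ κ) (hν : ν ≪ κ) : midMeasure μ ν ≪ κ :=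
  Measure.smul_absolutelyContinuous.trans (hμ.add_left hν)

lemma integrable_midMeasure {f : α → ℝ} (hμ : Integrable f μ) (hν : Integrable f ν) :
    Integrable f (midMeasure μ ν) :=
  (hμ.add_measure hν).smul_measure (by simp)

lemma integral_midMeasure {f : α → ℝ} (hμ : Integrable f μ) (hν : Integrable f ν) :
    ∫ x, f x ∂(midMeasure μ ν) = (∫ x, f x ∂μ + ∫ x, f x ∂ν) / 2 := by
  rw [midMeasure, integral_smul_measure, integral_add_measure hμ hν]
  simp [div_eq_inv_mul]

lemma toReal_rnDeriv_midMeasure_add [IsFiniteMeasure μ] [IsFiniteMeasure ν] :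
    ∀ᵐ x ∂(midMeasure μ ν), (μ.rnDeriv (midMeasure μ ν) x).toReal
      + (ν.rnDeriv (midMeasure μ ν) x).toReal = 2 := by
  set m := midMeasure μ ν
  have h_two : μ + ν = (2 : ℝ≥0∞) • m := by
    simp [m, midMeasure, smul_smul, ENNReal.mul_inv_cancel]
  have h_add := Measure.rnDeriv_add μ ν m
  rw [h_two] at h_add
  filter_upwards [h_add, Measure.rnDeriv_smul_left_of_ne_top m m (ENNReal.ofNat_ne_top (n := 2)),
    Measure.rnDeriv_self m, Measure.rnDeriv_lt_top μ m, Measure.rnDeriv_lt_top ν m]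
    with x hx h_smul h_self hμ_fin hν_fin
  rw [← ENNReal.toReal_add hμ_fin.ne hν_fin.ne, ← Pi.add_apply, ← hx, h_smul]
  simp [h_self]

lemma integrable_llr_midMeasure_left [IsFiniteMeasure μ] [IsFiniteMeasure ν] :
    Integrable (llr μ (midMeasure μ ν)) μ :=
  integrable_llr_of_toReal_rnDeriv_le (absolutelyContinuous_midMeasure_left μ ν) (C := 2) <| by
    filter_upwards [toReal_rnDeriv_midMeasure_add (μ := μ) (ν := ν)] with x hx
    linarith [ENNReal.toReal_nonneg (a := ν.rnDeriv (midMeasure μ ν) x)]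

lemma integrable_llr_midMeasure_right [IsFiniteMeasure μ] [IsFiniteMeasure ν] :
    Integrable (llr ν (midMeasure μ ν)) ν := by
  rw [midMeasure_comm]
  exact integrable_llr_midMeasure_left

lemma integrable_llr_midMeasure_of_left [IsFiniteMeasure μ] [IsFiniteMeasure ν] [SigmaFinite κ]
    (hμ : μ ≪ κ) (hν : ν ≪ κ) (hμ_int : Integrable (llr μ κ) μ) :
    Integrable (llr (midMeasure μ ν) κ) μ :=
  integrable_llr_right_of_ac (absolutelyContinuous_midMeasure_left μ ν)
    (midMeasure_absolutelyContinuous hμ hν) hμ_int integrable_llr_midMeasure_left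

lemma integrable_llr_midMeasure_of_right [IsFiniteMeasure μ] [IsFiniteMeasure ν] [SigmaFinite κ]
    (hμ : μ ≪ κ) (hν : ν ≪ κ) (hν_int : Integrable (llr ν κ) ν) :
    Integrable (llr (midMeasure μ ν) κ) ν :=
  integrable_llr_right_of_ac (absolutelyContinuous_midMeasure_right μ ν)
    (midMeasure_absolutelyContinuous hμ hν) hν_int integrable_llr_midMeasure_right

lemma integrable_llr_midMeasure [IsFiniteMeasure μ] [IsFiniteMeasure ν] [SigmaFinite κ]
    (hμ : μ ≪ κ) (hν : ν ≪ κ) (hμ_int : Integrable (llr μ κ) μ)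
    (hν_int : Integrable (llr ν κ) ν) :
    Integrable (llr (midMeasure μ ν) κ) (midMeasure μ ν) :=
  integrable_midMeasure (integrable_llr_midMeasure_of_left hμ hν hμ_int)
    (integrable_llr_midMeasure_of_right hμ hν hν_int)

lemma integral_llr_midMeasure [IsFiniteMeasure μ] [IsFiniteMeasure ν] [SigmaFinite κ]
    (hμ : μ ≪ κ) (hν : ν ≪ κ) (hμ_int : Integrable (llr μ κ) μ)
    (hν_int : Integrable (llr ν κ) ν) :
    ∫ x, llr (midMeasure μ ν) κ x ∂(midMeasure μ ν) =
      (∫ x, llr μ κ x ∂μ + ∫ x, llr ν κ x ∂ν) / 2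
        - (∫ x, llr μ (midMeasure μ ν) x ∂μ + ∫ x, llr ν (midMeasure μ ν) x ∂ν) / 2 := by
  have hmκ := midMeasure_absolutelyContinuous hμ hν
  have hμ_mid := integrable_llr_midMeasure_of_left hμ hν hμ_int
  have hν_mid := integrable_llr_midMeasure_of_right hμ hν hν_int
  rw [integral_midMeasure hμ_mid hν_mid,
    integral_llr_eq_add_of_ac (absolutelyContinuous_midMeasure_left μ ν) hmκ
      integrable_llr_midMeasure_left hμ_mid,
    integral_llr_eq_add_of_ac (absolutelyContinuous_midMeasure_right μ ν) hmκ
      integrable_llr_midMeasure_right hν_mid]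
  ring

lemma sq_tvDist_le_integral_llr_midMeasure [IsProbabilityMeasure μ] [IsProbabilityMeasure ν] :
    tvDist μ ν ^ 2 ≤ ∫ x, llr μ (midMeasure μ ν) x ∂μ + ∫ x, llr ν (midMeasure μ ν) x ∂ν := by
  set m := midMeasure μ ν
  set φ := fun x ↦ (μ.rnDeriv m x).toReal
  set ψ := fun x ↦ (ν.rnDeriv m x).toReal
  have hφψ : ∀ᵐ x ∂m, ψ x = 2 - φ x ∧ 0 ≤ φ x ∧ φ x ≤ 2 := by
    filter_upwards [toReal_rnDeriv_midMeasure_add (μ := μ) (ν := ν)] with x hx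
    have : 0 ≤ ψ x := ENNReal.toReal_nonneg
    exact ⟨by linarith, ENNReal.toReal_nonneg, by linarith⟩
  have hφ_memLp : MemLp (fun x ↦ |φ x - 1|) 2 m := by
    refine MemLp.of_bound (by fun_prop) 1 ?_
    filter_upwards [hφψ] with x ⟨_, h₀, h₂⟩
    simpa [abs_le] using ⟨by linarith, by linarith⟩
  have hφ_int : Integrable (fun x ↦ φ x * log (φ x)) m :=
    (integrable_rnDeriv_mul_log_iff (absolutelyContinuous_midMeasure_left μ ν)).2
      integrable_llr_midMeasure_left
  have hψ_int : Integrable (fun x ↦ ψ x * log (ψ x)) m :=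
    (integrable_rnDeriv_mul_log_iff (absolutelyContinuous_midMeasure_right μ ν)).2
      integrable_llr_midMeasure_right
  have h_tv : tvDist μ ν ≤ ∫ x, |φ x - 1| ∂m := by
    have h_abs : ∫ x, |φ x - ψ x| ∂m = 2 * ∫ x, |φ x - 1| ∂m := by
      rw [← integral_const_mul]
      refine integral_congr_ae ?_
      filter_upwards [hφψ] with x ⟨hψ, _⟩
      rw [hψ, show φ x - (2 - φ x) = 2 * (φ x - 1) by ring, abs_mul, abs_two]
    have := tvDist_le_integral_abs_sub_rnDeriv (absolutelyContinuous_midMeasure_left μ ν)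
      (absolutelyContinuous_midMeasure_right μ ν) (by simp)
    linarith
  calc tvDist μ ν ^ 2 ≤ (∫ x, |φ x - 1| ∂m) ^ 2 := pow_le_pow_left₀ (tvDist_nonneg μ ν) h_tv 2
    _ ≤ ∫ x, |φ x - 1| ^ 2 ∂m := sq_integral_le_integral_sq hφ_memLp
    _ ≤ ∫ x, (φ x * log (φ x) + ψ x * log (ψ x)) ∂m := by
        refine integral_mono_ae hφ_memLp.integrable_sq (hφ_int.add hψ_int) ?_
        filter_upwards [hφψ] with x ⟨hψ, h₀, h₂⟩
        rw [sq_abs, hψ]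
        exact sq_sub_one_le_mul_log_add_two_sub_mul_log h₀ h₂
    _ = ∫ x, llr μ m x ∂μ + ∫ x, llr ν m x ∂ν := by
        rw [integral_add hφ_int hψ_int,
          integral_rnDeriv_mul_log (absolutelyContinuous_midMeasure_left μ ν),
          integral_rnDeriv_mul_log (absolutelyContinuous_midMeasure_right μ ν)]

end

lemma EReal.one_div_two_eq_coe : (1 / 2 : EReal) = ((1 / 2 : ℝ) : EReal) := by
  rw [one_div, one_div, EReal.coe_inv]
  norm_cast

lemma EReal.half_mul_top_add_half_mul_sub {y : EReal} (hy : y ≠ ⊥) (c : ℝ) :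
    (1 / 2 : EReal) * ⊤ + 1 / 2 * y - 1 / 2 * c = ⊤ := by
  rw [EReal.one_div_two_eq_coe, EReal.coe_mul_top_of_pos (by norm_num),
    EReal.top_add_of_ne_bot ((EReal.mul_ne_bot _ _).2 ⟨.inl (EReal.coe_ne_bot _), .inr hy,
      .inl (EReal.coe_ne_top _), .inl (by norm_num)⟩), ← EReal.coe_mul, EReal.top_sub_coe]

theorem relEntropy_average_le {Y : Type*} [MeasurableSpace Y] (p q r : Measure Y)
    [IsProbabilityMeasure p] [IsProbabilityMeasure q] [IsProbabilityMeasure r] :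
    relEntropy ((2 : ℝ≥0∞)⁻¹ • (p + q)) r ≤
      (1/2 : EReal) * relEntropy p r + (1/2 : EReal) * relEntropy q r
        - (1/2 : EReal) * ((tvDist p q ^ 2 : ℝ) : EReal) := by
  by_cases hp : p ≪ r ∧ Integrable (llr p r) p
  swap
  · rw [relEntropy_of_not hp, EReal.half_mul_top_add_half_mul_sub (relEntropy_ne_bot q r)]
    exact le_top
  by_cases hq : q ≪ r ∧ Integrable (llr q r) q
  swap
  · rw [relEntropy_of_not hq, add_comm (1 / 2 * relEntropy p r),
      EReal.half_mul_top_add_half_mul_sub (relEntropy_ne_bot p r)]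
    exact le_top
  have hm : midMeasure p q ≪ r ∧ Integrable (llr (midMeasure p q) r) (midMeasure p q) :=
    ⟨midMeasure_absolutelyContinuous hp.1 hq.1, integrable_llr_midMeasure hp.1 hq.1 hp.2 hq.2⟩
  change relEntropy (midMeasure p q) r ≤ _
  rw [relEntropy_of_ac_of_integrable hm, relEntropy_of_ac_of_integrable hp,
    relEntropy_of_ac_of_integrable hq, EReal.one_div_two_eq_coe, ← EReal.coe_mul,
    ← EReal.coe_mul, ← EReal.coe_mul, ← EReal.coe_add, ← EReal.coe_sub, EReal.coe_le_coe_iff,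
    integral_llr_midMeasure hp.1 hq.1 hp.2 hq.2]
  linarith [sq_tvDist_le_integral_llr_midMeasure (μ := p) (ν := q)]
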